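/- Behavior of overlapping Taylor transmission conditions at the shear-wave cutoff (Theorem 3.4, k = ω/Cs): at k = ω/Cs one has λ₁ = 0 and λ₂ = ω√(Cp² − Cs²)/(Cp·Cs) > 0, the matrix entries satisfy b₁₁ = 1 and b₂₁ = 0 with |b₂₂| = 1, and for every overlap δ > 0 the two roots of the quadratic Q_δ(z) = z² − (X_δ² + 2Y_δ)z + Y_δ² are exactly 1 and e^{−2λ₂δ}·b₂₂²; in particular one root has modulus 1 and the other has modulus e^{−2λ₂δ} < 1, so the method stagnates at this frequency for any overlap. -/

import Mathlib

noncomputable section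

open Complex

/-- `λ₁ = √(k² − ω²/Cs²)`, principal branch of the complex square root. -/
def lam1 (ω Cs k : ℝ) : ℂ := ((k ^ 2 - ω ^ 2 / Cs ^ 2 : ℝ) : ℂ) ^ ((1 : ℂ) / 2)

/-- `λ₂ = √(k² − ω²/Cp²)`, principal branch of the complex square root. -/
def lam2 (ω Cp k : ℝ) : ℂ := ((k ^ 2 - ω ^ 2 / Cp ^ 2 : ℝ) : ℂ) ^ ((1 : ℂ) / 2)

/-- `Z₁ = Cs³(k² + λ₁²)² + ω²Cp·k²`. -/
def Z1 (ω Cs Cp k : ℝ) : ℂ :=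
  (Cs : ℂ) ^ 3 * ((k : ℂ) ^ 2 + (lam1 ω Cs k) ^ 2) ^ 2 + (ω : ℂ) ^ 2 * (Cp : ℂ) * (k : ℂ) ^ 2

/-- `Z₂ = (4Cs³k² + Cpω²)λ₁λ₂`. -/
def Z2 (ω Cs Cp k : ℝ) : ℂ :=
  (4 * (Cs : ℂ) ^ 3 * (k : ℂ) ^ 2 + (Cp : ℂ) * (ω : ℂ) ^ 2) * lam1 ω Cs k * lam2 ω Cp k

/-- `K = 2k(Cpω² + 2Cs³(k² + λ₁²))`. -/
def Kq (ω Cs Cp k : ℝ) : ℂ :=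
  2 * (k : ℂ) * ((Cp : ℂ) * (ω : ℂ) ^ 2 + 2 * (Cs : ℂ) ^ 3 * ((k : ℂ) ^ 2 + (lam1 ω Cs k) ^ 2))

/-- `D = −Z₁ + Z₂ + iω³(λ₁ + λ₂Cp/Cs)`. -/
def Dq (ω Cs Cp k : ℝ) : ℂ :=
  -Z1 ω Cs Cp k + Z2 ω Cs Cp k +
    Complex.I * (ω : ℂ) ^ 3 * (lam1 ω Cs k + lam2 ω Cp k * (Cp : ℂ) / (Cs : ℂ))

/-- `b₁₁ = (−Z₁ − Z₂ − iω³(λ₁ − λ₂Cp/Cs))/D`. -/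
def b11 (ω Cs Cp k : ℝ) : ℂ :=
  (-Z1 ω Cs Cp k - Z2 ω Cs Cp k -
    Complex.I * (ω : ℂ) ^ 3 * (lam1 ω Cs k - lam2 ω Cp k * (Cp : ℂ) / (Cs : ℂ))) / Dq ω Cs Cp k

/-- `b₁₂ = iλ₂K/D`. -/
def b12 (ω Cs Cp k : ℝ) : ℂ :=
  Complex.I * lam2 ω Cp k * Kq ω Cs Cp k / Dq ω Cs Cp k

/-- `b₂₁ = −iλ₁K/D`. -/
def b21 (ω Cs Cp k : ℝ) : ℂ :=
  -Complex.I * lam1 ω Cs k * Kq ω Cs Cp k / Dq ω Cs Cp k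

/-- `b₂₂ = (−Z₁ − Z₂ + iω³(λ₁ − λ₂Cp/Cs))/D`. -/
def b22 (ω Cs Cp k : ℝ) : ℂ :=
  (-Z1 ω Cs Cp k - Z2 ω Cs Cp k +
    Complex.I * (ω : ℂ) ^ 3 * (lam1 ω Cs k - lam2 ω Cp k * (Cp : ℂ) / (Cs : ℂ))) / Dq ω Cs Cp k

/-- `X_δ = e^{−λ₁δ}b₁₁ − e^{−λ₂δ}b₂₂`. -/
def Xd (ω Cs Cp k δ : ℝ) : ℂ :=
  Complex.exp (-(lam1 ω Cs k) * (δ : ℂ)) * b11 ω Cs Cp k -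
    Complex.exp (-(lam2 ω Cp k) * (δ : ℂ)) * b22 ω Cs Cp k

/-- `Y_δ = e^{−(λ₁+λ₂)δ}(b₁₁b₂₂ − b₁₂b₂₁)`. -/
def Yd (ω Cs Cp k δ : ℝ) : ℂ :=
  Complex.exp (-(lam1 ω Cs k + lam2 ω Cp k) * (δ : ℂ)) *
    (b11 ω Cs Cp k * b22 ω Cs Cp k - b12 ω Cs Cp k * b21 ω Cs Cp k)

/-- The quadratic `Q_δ(z) = z² − (X_δ² + 2Y_δ)z + Y_δ²` whose roots are the eigenvalues `r±`
of the double-iteration operator of the Schwarz method with zeroth-order Taylor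
transmission conditions. -/
def Qd (ω Cs Cp k δ : ℝ) (z : ℂ) : ℂ :=
  z ^ 2 - ((Xd ω Cs Cp k δ) ^ 2 + 2 * Yd ω Cs Cp k δ) * z + (Yd ω Cs Cp k δ) ^ 2

/-!
At the shear cutoff `k = ω/Cs` the shear root `λ₁` vanishes. This kills `Z₂` and `b₂₁`, and the
numerator of `b₁₁` becomes `D` itself. Since `Z₁` is then real and `λ₂` is real and positive,
the numerator of `b₂₂` is `conj D`, so `|b₂₂| = 1`. Writing `x = e^{−λ₂δ} b₂₂` one gets
`X_δ = 1 − x` and `Y_δ = x`, hence `Q_δ(z) = z² − (1 + x²) z + x² = (z − 1)(z − x²)`.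
-/

open ComplexConjugate

theorem ofReal_cpow_one_half {x : ℝ} (hx : 0 ≤ x) : (x : ℂ) ^ ((1 : ℂ) / 2) = (√x : ℝ) := by
  rw [Real.sqrt_eq_rpow, ofReal_cpow hx]
  norm_num

theorem lam1_shear_cutoff (ω Cs : ℝ) : lam1 ω Cs (ω / Cs) = 0 := by
  rw [lam1, div_pow, sub_self, ofReal_zero, zero_cpow (by norm_num)]

theorem lam2_shear_cutoff {ω Cs Cp : ℝ} (hω : 0 ≤ ω) (hCs : 0 < Cs) (hCsCp : Cs ≤ Cp) :
    lam2 ω Cp (ω / Cs) = ((ω * √(Cp ^ 2 - Cs ^ 2) / (Cp * Cs) : ℝ) : ℂ) := by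
  have hCp : 0 < Cp := hCs.trans_le hCsCp
  have hdiff : 0 ≤ Cp ^ 2 - Cs ^ 2 := by nlinarith
  have hradicand : (ω / Cs) ^ 2 - ω ^ 2 / Cp ^ 2 = (ω * √(Cp ^ 2 - Cs ^ 2) / (Cp * Cs)) ^ 2 := by
    rw [div_pow, div_pow, mul_pow, mul_pow, Real.sq_sqrt hdiff]
    field_simp
  rw [lam2, hradicand, ofReal_cpow_one_half (sq_nonneg _), Real.sqrt_sq (by positivity)]

section ShearCutoff

variable {ω Cs Cp k : ℝ}

theorem b21_eq_zero_of_lam1_eq_zero (h1 : lam1 ω Cs k = 0) : b21 ω Cs Cp k = 0 := by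
  simp [b21, h1]

theorem b11_eq_one_of_lam1_eq_zero (h1 : lam1 ω Cs k = 0) (hD : Dq ω Cs Cp k ≠ 0) :
    b11 ω Cs Cp k = 1 := by
  have hnum : -Z1 ω Cs Cp k - Z2 ω Cs Cp k -
      I * (ω : ℂ) ^ 3 * (lam1 ω Cs k - lam2 ω Cp k * (Cp : ℂ) / (Cs : ℂ)) = Dq ω Cs Cp k := by
    simp only [Dq, Z2, h1]
    ring
  rw [b11, hnum, div_self hD]

theorem b22_eq_conj_div_of_lam1_eq_zero (h1 : lam1 ω Cs k = 0)
    (h2 : conj (lam2 ω Cp k) = lam2 ω Cp k) :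
    b22 ω Cs Cp k = conj (Dq ω Cs Cp k) / Dq ω Cs Cp k := by
  have hnum : -Z1 ω Cs Cp k - Z2 ω Cs Cp k +
      I * (ω : ℂ) ^ 3 * (lam1 ω Cs k - lam2 ω Cp k * (Cp : ℂ) / (Cs : ℂ)) =
      conj (Dq ω Cs Cp k) := by
    simp only [Dq, Z1, Z2, h1, map_add, map_neg, map_mul, map_div₀, map_pow, map_ofNat,
      map_zero, conj_ofReal, conj_I, h2]
    ring
  rw [b22, hnum]

theorem norm_b22_eq_one_of_lam1_eq_zero (h1 : lam1 ω Cs k = 0)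
    (h2 : conj (lam2 ω Cp k) = lam2 ω Cp k) (hD : Dq ω Cs Cp k ≠ 0) :
    ‖b22 ω Cs Cp k‖ = 1 := by
  rw [b22_eq_conj_div_of_lam1_eq_zero h1 h2, norm_div, norm_conj, div_self (norm_ne_zero_iff.2 hD)]

theorem Qd_eq_mul_of_lam1_eq_zero (h1 : lam1 ω Cs k = 0) (hD : Dq ω Cs Cp k ≠ 0) (δ : ℝ) (z : ℂ) :
    Qd ω Cs Cp k δ z =
      (z - 1) * (z - exp (-2 * lam2 ω Cp k * δ) * b22 ω Cs Cp k ^ 2) := by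
  have hexp : exp (-2 * lam2 ω Cp k * δ) = exp (-lam2 ω Cp k * δ) ^ 2 := by
    rw [← exp_nat_mul]
    ring_nf
  simp only [Qd, Xd, Yd, h1, b11_eq_one_of_lam1_eq_zero h1 hD, b21_eq_zero_of_lam1_eq_zero h1,
    hexp, neg_zero, zero_mul, exp_zero, zero_add, mul_zero, sub_zero, one_mul]
  ring

end ShearCutoff

theorem taylor_overlapping_shear_cutoff_stagnation_general
    (ω Cs Cp k δ : ℝ)
    (hω : 0 < ω) (hCs : 0 < Cs) (hCsCp : Cs < Cp)
    (hk : k = ω / Cs) (hδ : 0 < δ)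
    (hD : Dq ω Cs Cp k ≠ 0) :
    lam1 ω Cs k = 0 ∧
    0 < ω * Real.sqrt (Cp ^ 2 - Cs ^ 2) / (Cp * Cs) ∧
    lam2 ω Cp k = ((ω * Real.sqrt (Cp ^ 2 - Cs ^ 2) / (Cp * Cs) : ℝ) : ℂ) ∧
    b11 ω Cs Cp k = 1 ∧
    b21 ω Cs Cp k = 0 ∧
    ‖b22 ω Cs Cp k‖ = 1 ∧
    (∀ z : ℂ, Qd ω Cs Cp k δ z = 0 ↔
      z = 1 ∨
      z = Complex.exp (-2 * ((ω * Real.sqrt (Cp ^ 2 - Cs ^ 2) / (Cp * Cs) : ℝ) : ℂ) * (δ : ℂ))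
            * (b22 ω Cs Cp k) ^ 2) ∧
    ‖Complex.exp (-2 * ((ω * Real.sqrt (Cp ^ 2 - Cs ^ 2) / (Cp * Cs) : ℝ) : ℂ)
          * (δ : ℂ)) * (b22 ω Cs Cp k) ^ 2‖
      = Real.exp (-2 * (ω * Real.sqrt (Cp ^ 2 - Cs ^ 2) / (Cp * Cs)) * δ) ∧
    Real.exp (-2 * (ω * Real.sqrt (Cp ^ 2 - Cs ^ 2) / (Cp * Cs)) * δ) < 1 := by
  subst hk
  have h1 := lam1_shear_cutoff ω Cs
  have h2 := lam2_shear_cutoff hω.le hCs hCsCp.le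
  set lam := ω * √(Cp ^ 2 - Cs ^ 2) / (Cp * Cs)
  have hlam_pos : 0 < lam :=
    div_pos (mul_pos hω (Real.sqrt_pos.2 (by nlinarith))) (mul_pos (hCs.trans hCsCp) hCs)
  have hb22 : ‖b22 ω Cs Cp (ω / Cs)‖ = 1 :=
    norm_b22_eq_one_of_lam1_eq_zero h1 (by rw [h2, conj_ofReal]) hD
  refine ⟨h1, hlam_pos, h2, b11_eq_one_of_lam1_eq_zero h1 hD, b21_eq_zero_of_lam1_eq_zero h1, hb22,
    fun z => ?_, ?_, Real.exp_lt_one_iff.2 (by nlinarith)⟩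
  · rw [Qd_eq_mul_of_lam1_eq_zero h1 hD, h2, mul_eq_zero, sub_eq_zero, sub_eq_zero]
  · rw [norm_mul, norm_pow, hb22, norm_exp]
    simp

/-- **Theorem 3.4, k = ω/Cs**: at the shear-wave cutoff, `λ₁ = 0` and
`λ₂ = ω√(Cp² − Cs²)/(Cp·Cs) > 0`, the entries satisfy `b₁₁ = 1`, `b₂₁ = 0` and `|b₂₂| = 1`,
and for every overlap `δ > 0` the two roots of `Q_δ(z) = z² − (X_δ² + 2Y_δ)z + Y_δ²` are
exactly `1` and `e^{−2λ₂δ}·b₂₂²`; one root has modulus `1` and the other has modulus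
`e^{−2λ₂δ} < 1`, so the method stagnates at this frequency for any overlap. -/
theorem taylor_overlapping_shear_cutoff_stagnation
    (ω Cs Cp k δ : ℝ)
    (hω : 0 < ω) (hCs : 0 < Cs) (hCsCp : Cs < Cp) (hCp2 : 2 * Cs ^ 2 < Cp ^ 2)
    (hk : k = ω / Cs) (hδ : 0 < δ)
    (hD : Dq ω Cs Cp k ≠ 0) :
    lam1 ω Cs k = 0 ∧
    0 < ω * Real.sqrt (Cp ^ 2 - Cs ^ 2) / (Cp * Cs) ∧
    lam2 ω Cp k = ((ω * Real.sqrt (Cp ^ 2 - Cs ^ 2) / (Cp * Cs) : ℝ) : ℂ) ∧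
    b11 ω Cs Cp k = 1 ∧
    b21 ω Cs Cp k = 0 ∧
    ‖b22 ω Cs Cp k‖ = 1 ∧
    (∀ z : ℂ, Qd ω Cs Cp k δ z = 0 ↔
      z = 1 ∨
      z = Complex.exp (-2 * ((ω * Real.sqrt (Cp ^ 2 - Cs ^ 2) / (Cp * Cs) : ℝ) : ℂ) * (δ : ℂ))
            * (b22 ω Cs Cp k) ^ 2) ∧
    ‖Complex.exp (-2 * ((ω * Real.sqrt (Cp ^ 2 - Cs ^ 2) / (Cp * Cs) : ℝ) : ℂ)
          * (δ : ℂ)) * (b22 ω Cs Cp k) ^ 2‖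
      = Real.exp (-2 * (ω * Real.sqrt (Cp ^ 2 - Cs ^ 2) / (Cp * Cs)) * δ) ∧
    Real.exp (-2 * (ω * Real.sqrt (Cp ^ 2 - Cs ^ 2) / (Cp * Cs)) * δ) < 1 :=
  taylor_overlapping_shear_cutoff_stagnation_general ω Cs Cp k δ hω hCs hCsCp hk hδ hD

end
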